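/- arXiv:math-ph/9810007 — 4 statements merged into one kernel-verified Lean document; each statement's English description precedes it below -/
import Mathlib

section
/- Let n ≥ 2, let U ⊆ ℂⁿ be an open set on which the coordinates λ₁,…,λₙ are pairwise distinct, and let A₁,…,Aₙ : U → M₂(ℂ) be differentiable. Let V = {(λ, λ₁,…,λₙ) ∈ ℂ × U : λ ≠ λ_j for all j}, and suppose Ψ : V → GL(2,ℂ) is twice continuously differentiable and satisfies, on all of V, the linear system ∂Ψ/∂λ = (Σ_{j=1}^n A_j(λ₁,…,λₙ)/(λ−λ_j))·Ψ and ∂Ψ/∂λ_j = −(A_j(λ₁,…,λₙ)/(λ−λ_j))·Ψ for every j = 1,…,n. Then the matrices A₁,…,Aₙ satisfy the Schlesinger equations on U: ∂A_j/∂λ_i = [A_i,A_j]/(λ_i−λ_j) for all i ≠ j, and ∂A_i/∂λ_i = −Σ_{j≠i}[A_i,A_j]/(λ_i−λ_j) for all i. -/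
/-!
Since `Ψ` is `C²`, its mixed partial derivatives `∂_λ ∂_{λ_i} Ψ` and `∂_{λ_i} ∂_λ Ψ` agree.
Substituting the linear system and cancelling the invertible `Ψ` gives, for every `λ` off the
poles, the zero-curvature equation
`∑_l ∂_i A_l / (λ - λ_l) = -(λ - λ_i)⁻¹ ∑_l [A_i, A_l] / (λ - λ_l)`.
After partial fractions both sides have only simple poles at the `λ_l`, and comparing residues
at `λ = λ_j` yields the Schlesinger equations.
-/

attribute [local instance] Matrix.normedAddCommGroup Matrix.normedSpace

/-- Partial derivative of `f` with respect to the `i`-th coordinate at `x`. -/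
noncomputable def pderiv' {E : Type*} [NormedAddCommGroup E] [NormedSpace ℂ E]
    {n : ℕ} (i : Fin n) (f : (Fin n → ℂ) → E) (x : Fin n → ℂ) : E :=
  deriv (fun s => f (Function.update x i s)) (x i)

open Filter Topology

section LineDeriv

variable {𝕜 F : Type*} [NontriviallyNormedField 𝕜] [NormedAddCommGroup F] [NormedSpace 𝕜 F]

theorem lineDeriv_one (f : 𝕜 → F) (x : 𝕜) : lineDeriv 𝕜 f x 1 = deriv f x := by
  simp [lineDeriv, deriv_comp_const_add]

theorem lineDeriv_single {ι : Type*} [DecidableEq ι] (f : (ι → 𝕜) → F) (x : ι → 𝕜) (i : ι) :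
    lineDeriv 𝕜 f x (Pi.single i 1) = deriv (fun s => f (Function.update x i s)) (x i) := by
  have hline : ∀ t : 𝕜, x + t • Pi.single i 1 = Function.update x i (x i + t) := by
    intro t
    ext l
    rcases eq_or_ne l i with rfl | hl <;> simp [*]
  simp only [lineDeriv, hline]
  rw [deriv_comp_const_add (fun s => f (Function.update x i s)), add_zero]

variable {E G : Type*} [NormedAddCommGroup E] [NormedSpace 𝕜 E] [NormedAddCommGroup G]
  [NormedSpace 𝕜 G]

theorem lineDeriv_prodMk_zero (f : E × G → F) (p : E × G) (v : E) :
    lineDeriv 𝕜 f p (v, 0) = lineDeriv 𝕜 (fun a => f (a, p.2)) p.1 v := by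
  simp only [lineDeriv, Prod.smul_mk, smul_zero]
  congr! 3 with t
  ext <;> simp

theorem lineDeriv_zero_prodMk (f : E × G → F) (p : E × G) (w : G) :
    lineDeriv 𝕜 f p (0, w) = lineDeriv 𝕜 (fun b => f (p.1, b)) p.2 w := by
  simp only [lineDeriv, Prod.smul_mk, smul_zero]
  congr! 3 with t
  ext <;> simp

end LineDeriv

section ZeroCurvature

variable {𝕜 : Type*} [RCLike 𝕜] {m : Type*} [Fintype m] [DecidableEq m]

/-- The entrywise sup norm on matrices is not submultiplicative, so `HasDerivAt.mul` does not
apply; multiplication is still a continuous bilinear map because matrices are finite-dimensional. -/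
noncomputable def Matrix.mulCLM : Matrix m m 𝕜 →L[𝕜] Matrix m m 𝕜 →L[𝕜] Matrix m m 𝕜 :=
  LinearMap.toContinuousLinearMap
    (LinearMap.toContinuousLinearMap.toLinearMap ∘ₗ LinearMap.mul 𝕜 (Matrix m m 𝕜))

theorem HasDerivAt.matrix_mul {f g : 𝕜 → Matrix m m 𝕜} {f' g' : Matrix m m 𝕜} {t : 𝕜}
    (hf : HasDerivAt f f' t) (hg : HasDerivAt g g' t) :
    HasDerivAt (fun s => f s * g s) (f' * g t + f t * g') t := by
  have h := (Matrix.mulCLM (𝕜 := 𝕜)).hasDerivAt_of_bilinear (fun _ => hf) (fun _ => hg)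
  rw [add_comm] at h
  exact h

variable {E : Type*} [NormedAddCommGroup E] [NormedSpace 𝕜 E]

theorem fderiv_fderiv_apply_eq_of_lineDeriv_eq_mul {Ψ F : E → Matrix m m 𝕜} {P u v : E}
    {F' : Matrix m m 𝕜} (hΨ : ContDiffAt 𝕜 2 Ψ P)
    (hu : ∀ᶠ Q in 𝓝 P, lineDeriv 𝕜 Ψ Q u = F Q * Ψ Q) (hF : HasLineDerivAt 𝕜 F F' P v) :
    fderiv 𝕜 (fderiv 𝕜 Ψ) P v u = F' * Ψ P + F P * lineDeriv 𝕜 Ψ P v := by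
  have hline : HasDerivAt (fun t : 𝕜 => P + t • v) v 0 := by
    simpa using ((hasDerivAt_id (0 : 𝕜)).smul_const v).const_add P
  have hline_tendsto : Tendsto (fun t : 𝕜 => P + t • v) (𝓝 0) (𝓝 P) := by
    simpa using hline.continuousAt.tendsto
  have hsecond : HasDerivAt (fun t : 𝕜 => fderiv 𝕜 Ψ (P + t • v) u)
      (fderiv 𝕜 (fderiv 𝕜 Ψ) P v u) 0 := by
    have hdiff : DifferentiableAt 𝕜 (fderiv 𝕜 Ψ) P :=
      (hΨ.fderiv_right (m := 1) (by norm_num)).differentiableAt one_ne_zero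
    have h := (ContinuousLinearMap.apply 𝕜 (Matrix m m 𝕜) u).hasFDerivAt.comp P hdiff.hasFDerivAt
    exact h.comp_hasDerivAt_of_eq (0 : 𝕜) hline (by simp)
  have heq : (fun t : 𝕜 => F (P + t • v) * Ψ (P + t • v)) =ᶠ[𝓝 0]
      fun t => fderiv 𝕜 Ψ (P + t • v) u := by
    have hdiff : ∀ᶠ Q in 𝓝 P, DifferentiableAt 𝕜 Ψ Q :=
      (hΨ.eventually (by simp)).mono fun Q hQ => hQ.differentiableAt two_ne_zero
    filter_upwards [hline_tendsto.eventually hu, hline_tendsto.eventually hdiff] with t ht hdt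
    rw [← ht]
    exact hdt.lineDeriv_eq_fderiv
  have hΨ' : HasLineDerivAt 𝕜 Ψ (lineDeriv 𝕜 Ψ P v) P v :=
    (hΨ.differentiableAt two_ne_zero).lineDifferentiableAt.hasLineDerivAt
  have hprod := HasDerivAt.matrix_mul (f := fun t => F (P + t • v)) hF hΨ'
  simp only [zero_smul, add_zero] at hprod
  exact hsecond.unique (hprod.congr_of_eventuallyEq heq.symm)

theorem zero_curvature_of_lineDeriv_eq_mul {Ψ F G : E → Matrix m m 𝕜} {P u v : E}
    {F' G' : Matrix m m 𝕜} (hΨ : ContDiffAt 𝕜 2 Ψ P) (hΨP : IsUnit (Ψ P))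
    (hu : ∀ᶠ Q in 𝓝 P, lineDeriv 𝕜 Ψ Q u = F Q * Ψ Q)
    (hv : ∀ᶠ Q in 𝓝 P, lineDeriv 𝕜 Ψ Q v = G Q * Ψ Q)
    (hF : HasLineDerivAt 𝕜 F F' P v) (hG : HasLineDerivAt 𝕜 G G' P u) :
    F' - G' + (F P * G P - G P * F P) = 0 := by
  have hmixed : F' * Ψ P + F P * lineDeriv 𝕜 Ψ P v = G' * Ψ P + G P * lineDeriv 𝕜 Ψ P u :=
    (fderiv_fderiv_apply_eq_of_lineDeriv_eq_mul hΨ hu hF).symm.trans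
      ((hΨ.isSymmSndFDerivAt (by simp) v u).trans
        (fderiv_fderiv_apply_eq_of_lineDeriv_eq_mul hΨ hv hG))
  rw [hu.self_of_nhds, hv.self_of_nhds, ← sub_eq_zero] at hmixed
  rw [← hΨP.mul_left_eq_zero, ← hmixed]
  noncomm_ring

end ZeroCurvature

section Residues

variable {𝕜 ι E : Type*} [NontriviallyNormedField 𝕜] [Fintype ι] [NormedAddCommGroup E]
  [NormedSpace 𝕜 E] {x : ι → 𝕜}

theorem eq_zero_of_forall_sum_inv_sub_smul_eq_zero (hx : Function.Injective x) {N : ι → E}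
    (h : ∀ z, (∀ l, z ≠ x l) → ∑ l, (z - x l)⁻¹ • N l = 0) (k : ι) : N k = 0 := by
  classical
  have hpoles : ∀ᶠ z in 𝓝[≠] x k, ∀ l, z ≠ x l := by
    refine eventually_all.2 fun l => ?_
    rcases eq_or_ne l k with rfl | hl
    · exact self_mem_nhdsWithin
    · exact nhdsWithin_le_nhds (eventually_ne_nhds (hx.ne hl).symm)
  have hres : Tendsto (fun z => ∑ l, ((z - x k) * (z - x l)⁻¹) • N l) (𝓝[≠] x k)
      (𝓝 (∑ l, if l = k then N l else 0)) := by
    refine tendsto_finsetSum _ fun l _ => ?_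
    split_ifs with hl
    · subst hl
      refine tendsto_const_nhds.congr' ?_
      filter_upwards [self_mem_nhdsWithin] with z hz
      rw [mul_inv_cancel₀ (sub_ne_zero.2 hz), one_smul]
    · have hcont : ContinuousAt (fun z => ((z - x k) * (z - x l)⁻¹) • N l) (x k) :=
        (by fun_prop : ContinuousAt (fun z : 𝕜 => z - x k) (x k)).mul
          ((by fun_prop : ContinuousAt (fun z : 𝕜 => z - x l) (x k)).inv₀
            (sub_ne_zero.2 (hx.ne (Ne.symm hl)))) |>.smul continuousAt_const
      simpa using hcont.tendsto.mono_left nhdsWithin_le_nhds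
  have hzero : (fun z => ∑ l, ((z - x k) * (z - x l)⁻¹) • N l) =ᶠ[𝓝[≠] x k] fun _ => 0 := by
    filter_upwards [hpoles] with z hz
    simp_rw [mul_smul, ← Finset.smul_sum, h z hz, smul_zero]
  simpa using tendsto_nhds_unique hres (tendsto_const_nhds.congr' hzero.symm)

theorem inv_sub_mul_inv_sub {a b z : 𝕜} (hab : a ≠ b) (ha : z ≠ a) (hb : z ≠ b) :
    (z - a)⁻¹ * (z - b)⁻¹ = (a - b)⁻¹ * ((z - a)⁻¹ - (z - b)⁻¹) := by
  field_simp [sub_ne_zero.2 hab, sub_ne_zero.2 ha, sub_ne_zero.2 hb]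
  ring

theorem eq_of_forall_sum_inv_sub_smul_add_eq_zero [DecidableEq ι] (hx : Function.Injective x)
    {i : ι} {M K : ι → E} (hK : K i = 0)
    (h : ∀ z, (∀ l, z ≠ x l) →
      ∑ l, (z - x l)⁻¹ • M l + (z - x i)⁻¹ • ∑ l, (z - x l)⁻¹ • K l = 0) :
    (∀ j, j ≠ i → M j = (x i - x j)⁻¹ • K j) ∧
      M i = -∑ l ∈ Finset.univ.erase i, (x i - x l)⁻¹ • K l := by
  set S := ∑ l, (x i - x l)⁻¹ • K l
  -- At `l = i` the correction `(x i - x l)⁻¹ • K l` vanishes, via `0⁻¹ = 0` as well as `K i = 0`.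
  have hN : ∀ z, (∀ l, z ≠ x l) →
      ∑ l, (z - x l)⁻¹ • (M l - (x i - x l)⁻¹ • K l + if l = i then S else 0) = 0 := by
    intro z hz
    have hterm : ∀ l, (z - x l)⁻¹ • (x i - x l)⁻¹ • K l =
        (z - x i)⁻¹ • (x i - x l)⁻¹ • K l - (z - x i)⁻¹ • (z - x l)⁻¹ • K l := by
      intro l
      rcases eq_or_ne l i with rfl | hl
      · simp [hK]
      · rw [smul_smul, smul_smul, smul_smul, ← sub_smul,
          inv_sub_mul_inv_sub (hx.ne (Ne.symm hl)) (hz i) (hz l)]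
        congr 1
        ring
    calc ∑ l, (z - x l)⁻¹ • (M l - (x i - x l)⁻¹ • K l + if l = i then S else 0)
        = ∑ l, (z - x l)⁻¹ • M l - ∑ l, (z - x l)⁻¹ • (x i - x l)⁻¹ • K l
            + (z - x i)⁻¹ • S := by
          simp [smul_add, smul_sub, Finset.sum_add_distrib, Finset.sum_sub_distrib]
      _ = ∑ l, (z - x l)⁻¹ • M l + (z - x i)⁻¹ • ∑ l, (z - x l)⁻¹ • K l := by
          simp only [hterm, Finset.sum_sub_distrib, ← Finset.smul_sum, S]
          abel
      _ = 0 := h z hz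
  have hres := eq_zero_of_forall_sum_inv_sub_smul_eq_zero hx hN
  refine ⟨fun j hj => ?_, ?_⟩
  · simpa [hj, sub_eq_zero] using hres j
  · rw [Finset.sum_erase _ (by simp [hK]), ← add_eq_zero_iff_eq_neg]
    simpa [hK] using hres i

end Residues

section Fuchsian

variable {E : Type*} [NormedAddCommGroup E] [NormedSpace ℂ E] {n : ℕ}

theorem DifferentiableAt.hasLineDerivAt_pderiv' {f : (Fin n → ℂ) → E} {x : Fin n → ℂ}
    (hf : DifferentiableAt ℂ f x) (i : Fin n) :
    HasLineDerivAt ℂ f (pderiv' i f x) x (Pi.single i 1) := by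
  rw [pderiv', ← lineDeriv_single]
  exact hf.lineDifferentiableAt.hasLineDerivAt

-- The `dλ`- and `dλ_j`-components of the connection `∑_j A_j d log (λ - λ_j)`, whose flat
-- sections are the solutions `Ψ` of the isomonodromic system.
noncomputable def fuchsianCoeff (A : Fin n → (Fin n → ℂ) → E) (P : ℂ × (Fin n → ℂ)) : E :=
  ∑ j, (P.1 - P.2 j)⁻¹ • A j P.2

noncomputable def deformationCoeff (A : Fin n → (Fin n → ℂ) → E) (j : Fin n)
    (P : ℂ × (Fin n → ℂ)) : E :=
  -((P.1 - P.2 j)⁻¹ • A j P.2)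

theorem hasLineDerivAt_deformationCoeff (A : Fin n → (Fin n → ℂ) → E) {j : Fin n} {z : ℂ}
    {x : Fin n → ℂ} (hz : z ≠ x j) :
    HasLineDerivAt ℂ (deformationCoeff A j) (((z - x j) ^ 2)⁻¹ • A j x) (z, x) (1, 0) := by
  have hinv : HasDerivAt (fun t : ℂ => (z + t - x j)⁻¹) (-((z - x j) ^ 2)⁻¹) 0 := by
    have := (((hasDerivAt_id (0 : ℂ)).const_add z).sub_const (x j)).fun_inv
      (by simpa [sub_eq_zero])
    simpa [neg_div, div_eq_inv_mul] using this
  simpa [HasLineDerivAt, deformationCoeff] using (hinv.smul_const (A j x)).fun_neg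

theorem hasLineDerivAt_fuchsianCoeff {A : Fin n → (Fin n → ℂ) → E} {z : ℂ} {x : Fin n → ℂ}
    (hA : ∀ l, DifferentiableAt ℂ (A l) x) (hz : ∀ l, z ≠ x l) (i : Fin n) :
    HasLineDerivAt ℂ (fuchsianCoeff A)
      (((z - x i) ^ 2)⁻¹ • A i x + ∑ l, (z - x l)⁻¹ • pderiv' i (A l) x)
      (z, x) (0, Pi.single i 1) := by
  have hterm : ∀ l, HasDerivAt
      (fun t : ℂ => (z - (x + t • (Pi.single i 1 : Fin n → ℂ)) l)⁻¹
        • A l (x + t • (Pi.single i 1 : Fin n → ℂ)))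
      ((z - x l)⁻¹ • pderiv' i (A l) x
        + (((z - x l) ^ 2)⁻¹ * (Pi.single i 1 : Fin n → ℂ) l) • A l x) 0 := by
    intro l
    have hinv : HasDerivAt (fun t : ℂ => (z - (x + t • (Pi.single i 1 : Fin n → ℂ)) l)⁻¹)
        (((z - x l) ^ 2)⁻¹ * (Pi.single i 1 : Fin n → ℂ) l) 0 := by
      have := (((hasDerivAt_id (0 : ℂ)).mul_const ((Pi.single i 1 : Fin n → ℂ) l)).const_add (x l)
        |>.const_sub z).fun_inv (by simpa [sub_eq_zero] using hz l)
      simpa [neg_div, div_eq_inv_mul] using this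
    simpa using hinv.fun_smul ((hA l).hasLineDerivAt_pderiv' i)
  have hsum := HasDerivAt.fun_sum (u := Finset.univ) fun l _ => hterm l
  simp only [Finset.sum_add_distrib] at hsum
  simpa [HasLineDerivAt, fuchsianCoeff, Pi.single_apply, add_comm] using hsum

variable {m : Type*} [Fintype m] [DecidableEq m]

theorem fuchsian_zero_curvature {Ψ : ℂ × (Fin n → ℂ) → Matrix m m ℂ}
    {A : Fin n → (Fin n → ℂ) → Matrix m m ℂ} {z : ℂ} {x : Fin n → ℂ} {i : Fin n}
    (hΨ : ContDiffAt ℂ 2 Ψ (z, x)) (hΨu : IsUnit (Ψ (z, x)))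
    (hA : ∀ l, DifferentiableAt ℂ (A l) x) (hz : ∀ l, z ≠ x l)
    (hlin : ∀ᶠ Q in 𝓝 (z, x), lineDeriv ℂ Ψ Q (1, 0) = fuchsianCoeff A Q * Ψ Q)
    (hiso : ∀ᶠ Q in 𝓝 (z, x),
      lineDeriv ℂ Ψ Q (0, Pi.single i 1) = deformationCoeff A i Q * Ψ Q) :
    ∑ l, (z - x l)⁻¹ • pderiv' i (A l) x
      + (z - x i)⁻¹ • ∑ l, (z - x l)⁻¹ • (A i x * A l x - A l x * A i x) = 0 := by
  rw [← zero_curvature_of_lineDeriv_eq_mul hΨ hΨu hlin hiso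
    (hasLineDerivAt_fuchsianCoeff hA hz i) (hasLineDerivAt_deformationCoeff A (hz i))]
  simp only [fuchsianCoeff, deformationCoeff, Finset.sum_mul, Finset.mul_sum, Finset.smul_sum,
    smul_mul_smul_comm, mul_neg, neg_mul, smul_sub, Finset.sum_neg_distrib,
    Finset.sum_sub_distrib, smul_smul, mul_comm (z - x i)⁻¹]
  abel

end Fuchsian

theorem isOpen_setOf_snd_mem_and_fst_ne {𝕜 ι : Type*} [NontriviallyNormedField 𝕜] [Finite ι]
    {U : Set (ι → 𝕜)} (hU : IsOpen U) :
    IsOpen {P : 𝕜 × (ι → 𝕜) | P.2 ∈ U ∧ ∀ j, P.1 ≠ P.2 j} := by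
  simp only [Set.ofPred_and, Set.ofPred_forall]
  exact (hU.preimage continuous_snd).inter
    (isOpen_iInter_of_finite fun j => isOpen_ne_fun continuous_fst (by fun_prop))

theorem isomonodromic_deformation_implies_schlesinger_general
    (n : ℕ)
    (U : Set (Fin n → ℂ)) (hU : IsOpen U)
    (hdist : ∀ x ∈ U, ∀ i j : Fin n, i ≠ j → x i ≠ x j)
    (A : Fin n → (Fin n → ℂ) → Matrix (Fin 2) (Fin 2) ℂ)
    (hA : ∀ j, DifferentiableOn ℂ (A j) U)
    (V : Set (ℂ × (Fin n → ℂ)))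
    (hV : V = {P : ℂ × (Fin n → ℂ) | P.2 ∈ U ∧ ∀ j, P.1 ≠ P.2 j})
    (Ψ : ℂ × (Fin n → ℂ) → Matrix (Fin 2) (Fin 2) ℂ)
    (hΨreg : ContDiffOn ℂ 2 Ψ V)
    (hΨinv : ∀ P ∈ V, IsUnit (Ψ P))
    (hlin : ∀ P ∈ V, deriv (fun s => Ψ (s, P.2)) P.1 =
      (∑ j : Fin n, (P.1 - P.2 j)⁻¹ • A j P.2) * Ψ P)
    (hiso : ∀ P ∈ V, ∀ j : Fin n,
      deriv (fun s => Ψ (P.1, Function.update P.2 j s)) (P.2 j) =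
        -((P.1 - P.2 j)⁻¹ • A j P.2) * Ψ P) :
    ∀ x ∈ U,
      (∀ i j : Fin n, i ≠ j →
        pderiv' i (A j) x =
          (x i - x j)⁻¹ • (A i x * A j x - A j x * A i x)) ∧
      (∀ i : Fin n,
        pderiv' i (A i) x =
          -∑ j ∈ Finset.univ.erase i,
            (x i - x j)⁻¹ • (A i x * A j x - A j x * A i x)) := by
  intro x hx
  have hVopen : IsOpen V := hV ▸ isOpen_setOf_snd_mem_and_fst_ne hU
  have hxinj : Function.Injective x := fun a b hab => by_contra fun h => hdist x hx a b h hab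
  have key : ∀ i z, (∀ l, z ≠ x l) →
      ∑ l, (z - x l)⁻¹ • pderiv' i (A l) x
        + (z - x i)⁻¹ • ∑ l, (z - x l)⁻¹ • (A i x * A l x - A l x * A i x) = 0 := by
    intro i z hz
    have hP : (z, x) ∈ V := hV ▸ ⟨hx, hz⟩
    have hnear : ∀ᶠ Q in 𝓝 (z, x), Q ∈ V := hVopen.mem_nhds hP
    refine fuchsian_zero_curvature (hΨreg.contDiffAt (hVopen.mem_nhds hP)) (hΨinv _ hP)
      (fun l => (hA l).differentiableAt (hU.mem_nhds hx)) hz ?_ ?_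
    · filter_upwards [hnear] with Q hQ
      rw [lineDeriv_prodMk_zero, lineDeriv_one]
      exact hlin Q hQ
    · filter_upwards [hnear] with Q hQ
      rw [lineDeriv_zero_prodMk, lineDeriv_single]
      exact hiso Q hQ i
  have hschlesinger := fun i : Fin n =>
    eq_of_forall_sum_inv_sub_smul_add_eq_zero hxinj (sub_self (A i x * A i x)) (key i)
  exact ⟨fun i j hij => (hschlesinger i).1 j hij.symm, fun i => (hschlesinger i).2⟩

theorem isomonodromic_deformation_implies_schlesinger
    (n : ℕ) (hn : 2 ≤ n)
    (U : Set (Fin n → ℂ)) (hU : IsOpen U)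
    (hdist : ∀ x ∈ U, ∀ i j : Fin n, i ≠ j → x i ≠ x j)
    (A : Fin n → (Fin n → ℂ) → Matrix (Fin 2) (Fin 2) ℂ)
    (hA : ∀ j, DifferentiableOn ℂ (A j) U)
    (V : Set (ℂ × (Fin n → ℂ)))
    (hV : V = {P : ℂ × (Fin n → ℂ) | P.2 ∈ U ∧ ∀ j, P.1 ≠ P.2 j})
    (Ψ : ℂ × (Fin n → ℂ) → Matrix (Fin 2) (Fin 2) ℂ)
    (hΨreg : ContDiffOn ℂ 2 Ψ V)
    (hΨinv : ∀ P ∈ V, IsUnit (Ψ P))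
    (hlin : ∀ P ∈ V, deriv (fun s => Ψ (s, P.2)) P.1 =
      (∑ j : Fin n, (P.1 - P.2 j)⁻¹ • A j P.2) * Ψ P)
    (hiso : ∀ P ∈ V, ∀ j : Fin n,
      deriv (fun s => Ψ (P.1, Function.update P.2 j s)) (P.2 j) =
        -((P.1 - P.2 j)⁻¹ • A j P.2) * Ψ P) :
    ∀ x ∈ U,
      (∀ i j : Fin n, i ≠ j →
        pderiv' i (A j) x =
          (x i - x j)⁻¹ • (A i x * A j x - A j x * A i x)) ∧
      (∀ i : Fin n,
        pderiv' i (A i) x =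
          -∑ j ∈ Finset.univ.erase i,
            (x i - x j)⁻¹ • (A i x * A j x - A j x * A i x)) :=
  isomonodromic_deformation_implies_schlesinger_general n U hU hdist A hA V hV Ψ hΨreg hΨinv hlin
    hiso
end

section
/- Let n ≥ 2, let U ⊆ ℂⁿ be a connected open set on which the coordinates λ₁,…,λₙ are pairwise distinct, and let A₁,…,Aₙ : U → M₂(ℂ) be differentiable maps satisfying the Schlesinger equations: ∂A_j/∂λ_i = [A_i,A_j]/(λ_i−λ_j) for all i ≠ j and ∂A_i/∂λ_i = −Σ_{j≠i}[A_i,A_j]/(λ_i−λ_j) for all i. Then for every j the functions tr A_j, tr(A_j²), and det A_j are constant on U; in particular, the eigenvalues of each A_j are integrals of motion of the Schlesinger system. -/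
/-!
Each Schlesinger equation says that a partial derivative of `A_j` is a commutator `[A_j, B]`.
Since `tr [M, B] = 0` and `tr ([M, B] M) = tr (M [M, B]) = 0`, every partial derivative of
`tr A_j` and of `tr (A_j²)` vanishes, so both are constant on the connected set `U`; for `2 × 2`
matrices `det M = ((tr M)² - tr (M²)) / 2`.
-/

attribute [local instance] Matrix.normedAddCommGroup Matrix.normedSpace

open Matrix

section MatrixCalculus

variable {𝕜 : Type*} [NontriviallyNormedField 𝕜] {l m n : Type*}

theorem Matrix.hasDerivAt_iff [Fintype m] [Fintype n] {M : 𝕜 → Matrix m n 𝕜}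
    {M' : Matrix m n 𝕜} {s : 𝕜} :
    HasDerivAt M M' s ↔ ∀ a b, HasDerivAt (fun s => M s a b) (M' a b) s :=
  hasDerivAt_pi.trans <| forall_congr' fun _ => hasDerivAt_pi

theorem HasDerivAt.matrix_trace [Fintype m] {M : 𝕜 → Matrix m m 𝕜} {M' : Matrix m m 𝕜} {s : 𝕜}
    (hM : HasDerivAt M M' s) : HasDerivAt (fun s => trace (M s)) (trace M') s :=
  HasDerivAt.fun_sum fun a _ => Matrix.hasDerivAt_iff.1 hM a a

theorem HasDerivAt.matrix_mul_s6 [Fintype l] [Fintype m] [Fintype n] {M : 𝕜 → Matrix l m 𝕜}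
    {N : 𝕜 → Matrix m n 𝕜} {M' : Matrix l m 𝕜} {N' : Matrix m n 𝕜} {s : 𝕜}
    (hM : HasDerivAt M M' s) (hN : HasDerivAt N N' s) :
    HasDerivAt (fun s => M s * N s) (M' * N s + M s * N') s := by
  refine Matrix.hasDerivAt_iff.2 fun a c => ?_
  simp only [Matrix.add_apply, mul_apply, ← Finset.sum_add_distrib]
  exact HasDerivAt.fun_sum fun b _ =>
    (Matrix.hasDerivAt_iff.1 hM a b).mul (Matrix.hasDerivAt_iff.1 hN b c)

variable {E : Type*} [NormedAddCommGroup E] [NormedSpace 𝕜 E] {x : E}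

theorem Matrix.differentiableAt_iff [Fintype m] [Fintype n] {M : E → Matrix m n 𝕜} :
    DifferentiableAt 𝕜 M x ↔ ∀ a b, DifferentiableAt 𝕜 (fun x => M x a b) x :=
  differentiableAt_pi.trans <| forall_congr' fun _ => differentiableAt_pi

theorem DifferentiableAt.matrix_trace [Fintype m] {M : E → Matrix m m 𝕜}
    (hM : DifferentiableAt 𝕜 M x) : DifferentiableAt 𝕜 (fun x => trace (M x)) x :=
  DifferentiableAt.fun_sum fun a _ => Matrix.differentiableAt_iff.1 hM a a

theorem DifferentiableAt.matrix_mul_s6 [Fintype l] [Fintype m] [Fintype n] {M : E → Matrix l m 𝕜}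
    {N : E → Matrix m n 𝕜} (hM : DifferentiableAt 𝕜 M x) (hN : DifferentiableAt 𝕜 N x) :
    DifferentiableAt 𝕜 (fun x => M x * N x) x := by
  refine Matrix.differentiableAt_iff.2 fun a c => ?_
  simp only [mul_apply]
  exact DifferentiableAt.fun_sum fun b _ =>
    (Matrix.differentiableAt_iff.1 hM a b).mul (Matrix.differentiableAt_iff.1 hN b c)

end MatrixCalculus

section Commutator

variable {R m : Type*} [CommRing R] [Fintype m] (M B : Matrix m m R)

theorem Matrix.trace_lie : trace ⁅M, B⁆ = 0 := by
  rw [Ring.lie_def, trace_sub, trace_mul_comm, sub_self]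

theorem Matrix.trace_lie_mul_self : trace (⁅M, B⁆ * M) = 0 := by
  rw [Ring.lie_def, sub_mul, trace_sub, mul_assoc, trace_mul_comm M, sub_self]

theorem Matrix.trace_mul_lie_self : trace (M * ⁅M, B⁆) = 0 := by
  rw [trace_mul_comm, trace_lie_mul_self]

end Commutator

theorem Matrix.two_mul_det_fin_two {R : Type*} [CommRing R] (M : Matrix (Fin 2) (Fin 2) R) :
    2 * M.det = M.trace ^ 2 - trace (M * M) := by
  simp only [det_fin_two, trace_fin_two, mul_apply, Fin.sum_univ_two]
  ring

section PartialDerivative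

variable {n : ℕ} {E : Type*} [NormedAddCommGroup E] [NormedSpace ℂ E]
  {f : (Fin n → ℂ) → E} {x : Fin n → ℂ}

theorem HasFDerivAt.hasDerivAt_update {f' : (Fin n → ℂ) →L[ℂ] E} (hf : HasFDerivAt f f' x)
    (i : Fin n) : HasDerivAt (fun s => f (Function.update x i s)) (f' (Pi.single i 1)) (x i) := by
  rw [← Function.update_eq_self i x] at hf
  exact hf.comp_hasDerivAt (x i) (_root_.hasDerivAt_update x i (x i))

theorem DifferentiableAt.pderiv'_eq_fderiv (hf : DifferentiableAt ℂ f x) (i : Fin n) :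
    pderiv' i f x = fderiv ℂ f x (Pi.single i 1) :=
  (hf.hasFDerivAt.hasDerivAt_update i).deriv

theorem DifferentiableAt.hasDerivAt_pderiv' (hf : DifferentiableAt ℂ f x) (i : Fin n) :
    HasDerivAt (fun s => f (Function.update x i s)) (pderiv' i f x) (x i) := by
  rw [hf.pderiv'_eq_fderiv]
  exact hf.hasFDerivAt.hasDerivAt_update i

theorem IsOpen.exists_eq_const_of_pderiv'_eq_zero {U : Set (Fin n → ℂ)} (hU : IsOpen U)
    (hconn : IsPreconnected U) (hf : DifferentiableOn ℂ f U)
    (hf' : ∀ x ∈ U, ∀ i, pderiv' i f x = 0) : ∃ c, ∀ x ∈ U, f x = c := by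
  refine hU.exists_is_const_of_fderiv_eq_zero hconn hf fun x hx => ?_
  have hfx := hf.differentiableAt (hU.mem_nhds hx)
  refine ContinuousLinearMap.coe_injective ((Pi.basisFun ℂ (Fin n)).ext fun i => ?_)
  simpa [← hfx.pderiv'_eq_fderiv] using hf' x hx i

variable {m : Type*} [Fintype m] {M : (Fin n → ℂ) → Matrix m m ℂ}

theorem DifferentiableAt.pderiv'_trace (hM : DifferentiableAt ℂ M x) (i : Fin n) :
    pderiv' i (fun x => trace (M x)) x = trace (pderiv' i M x) :=
  (hM.hasDerivAt_pderiv' i).matrix_trace.deriv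

theorem DifferentiableAt.pderiv'_trace_mul_self (hM : DifferentiableAt ℂ M x) (i : Fin n) :
    pderiv' i (fun x => trace (M x * M x)) x =
      trace (pderiv' i M x * M x) + trace (M x * pderiv' i M x) := by
  have hline := hM.hasDerivAt_pderiv' i
  have hsq := (hline.matrix_mul_s6 hline).matrix_trace
  rw [Function.update_eq_self, trace_add] at hsq
  exact hsq.deriv

end PartialDerivative

section IsospectralFlow

variable {n : ℕ} {m : Type*} [Fintype m] {U : Set (Fin n → ℂ)} {M : (Fin n → ℂ) → Matrix m m ℂ}

theorem exists_trace_eq_const_of_pderiv'_eq_lie (hU : IsOpen U) (hconn : IsPreconnected U)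
    (hM : DifferentiableOn ℂ M U) (hlie : ∀ x ∈ U, ∀ i, ∃ B, pderiv' i M x = ⁅M x, B⁆) :
    ∃ c, ∀ x ∈ U, trace (M x) = c := by
  refine hU.exists_eq_const_of_pderiv'_eq_zero hconn
    (fun x hx => (hM.differentiableAt (hU.mem_nhds hx)).matrix_trace.differentiableWithinAt)
    fun x hx i => ?_
  obtain ⟨B, hB⟩ := hlie x hx i
  rw [(hM.differentiableAt (hU.mem_nhds hx)).pderiv'_trace, hB, trace_lie]

theorem exists_trace_mul_self_eq_const_of_pderiv'_eq_lie (hU : IsOpen U)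
    (hconn : IsPreconnected U) (hM : DifferentiableOn ℂ M U)
    (hlie : ∀ x ∈ U, ∀ i, ∃ B, pderiv' i M x = ⁅M x, B⁆) :
    ∃ c, ∀ x ∈ U, trace (M x * M x) = c := by
  refine hU.exists_eq_const_of_pderiv'_eq_zero hconn (fun x hx => ?_) fun x hx i => ?_
  · have hMx := hM.differentiableAt (hU.mem_nhds hx)
    exact (hMx.matrix_mul_s6 hMx).matrix_trace.differentiableWithinAt
  · obtain ⟨B, hB⟩ := hlie x hx i
    rw [(hM.differentiableAt (hU.mem_nhds hx)).pderiv'_trace_mul_self, hB, trace_lie_mul_self,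
      trace_mul_lie_self, add_zero]

end IsospectralFlow

theorem schlesinger_pderiv'_eq_lie {n : ℕ} {U : Set (Fin n → ℂ)}
    {A : Fin n → (Fin n → ℂ) → Matrix (Fin 2) (Fin 2) ℂ}
    (hSchOff : ∀ x ∈ U, ∀ i j : Fin n, i ≠ j →
      pderiv' i (A j) x = (x i - x j)⁻¹ • (A i x * A j x - A j x * A i x))
    (hSchDiag : ∀ x ∈ U, ∀ i : Fin n,
      pderiv' i (A i) x =
        -∑ j ∈ Finset.univ.erase i,
          (x i - x j)⁻¹ • (A i x * A j x - A j x * A i x))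
    (j : Fin n) : ∀ x ∈ U, ∀ i, ∃ B, pderiv' i (A j) x = ⁅A j x, B⁆ := by
  intro x hx i
  rcases eq_or_ne i j with rfl | hij
  · refine ⟨-∑ k ∈ Finset.univ.erase i, (x i - x k)⁻¹ • A k x, ?_⟩
    rw [hSchDiag x hx i, Ring.lie_def, mul_neg, neg_mul, sub_neg_eq_add, neg_add_eq_sub,
      Finset.mul_sum, Finset.sum_mul, ← Finset.sum_sub_distrib, ← Finset.sum_neg_distrib]
    refine Finset.sum_congr rfl fun k _ => ?_
    rw [smul_mul_assoc, mul_smul_comm, ← smul_sub, ← smul_neg, neg_sub]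
  · refine ⟨-(x i - x j)⁻¹ • A i x, ?_⟩
    rw [hSchOff x hx i j hij, Ring.lie_def, neg_smul, mul_neg, neg_mul, mul_smul_comm,
      smul_mul_assoc, sub_neg_eq_add, neg_add_eq_sub, smul_sub]

theorem schlesinger_spectral_invariants_general
    (n : ℕ)
    (U : Set (Fin n → ℂ)) (hU : IsOpen U) (hUconn : IsConnected U)
    (A : Fin n → (Fin n → ℂ) → Matrix (Fin 2) (Fin 2) ℂ)
    (hA : ∀ j, DifferentiableOn ℂ (A j) U)
    (hSchOff : ∀ x ∈ U, ∀ i j : Fin n, i ≠ j →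
      pderiv' i (A j) x = (x i - x j)⁻¹ • (A i x * A j x - A j x * A i x))
    (hSchDiag : ∀ x ∈ U, ∀ i : Fin n,
      pderiv' i (A i) x =
        -∑ j ∈ Finset.univ.erase i,
          (x i - x j)⁻¹ • (A i x * A j x - A j x * A i x)) :
    ∀ j : Fin n,
      (∃ c : ℂ, ∀ x ∈ U, Matrix.trace (A j x) = c) ∧
      (∃ c : ℂ, ∀ x ∈ U, Matrix.trace (A j x * A j x) = c) ∧
      (∃ c : ℂ, ∀ x ∈ U, Matrix.det (A j x) = c) := by
  intro j
  have hlie := schlesinger_pderiv'_eq_lie hSchOff hSchDiag j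
  obtain ⟨c₁, hc₁⟩ :=
    exists_trace_eq_const_of_pderiv'_eq_lie hU hUconn.isPreconnected (hA j) hlie
  obtain ⟨c₂, hc₂⟩ :=
    exists_trace_mul_self_eq_const_of_pderiv'_eq_lie hU hUconn.isPreconnected (hA j) hlie
  refine ⟨⟨c₁, hc₁⟩, ⟨c₂, hc₂⟩, ⟨(c₁ ^ 2 - c₂) / 2, fun x hx => ?_⟩⟩
  rw [eq_div_iff two_ne_zero, mul_comm, two_mul_det_fin_two, hc₁ x hx, hc₂ x hx]

theorem schlesinger_spectral_invariants
    (n : ℕ) (hn : 2 ≤ n)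
    (U : Set (Fin n → ℂ)) (hU : IsOpen U) (hUconn : IsConnected U)
    (hdist : ∀ x ∈ U, ∀ i j : Fin n, i ≠ j → x i ≠ x j)
    (A : Fin n → (Fin n → ℂ) → Matrix (Fin 2) (Fin 2) ℂ)
    (hA : ∀ j, DifferentiableOn ℂ (A j) U)
    (hSchOff : ∀ x ∈ U, ∀ i j : Fin n, i ≠ j →
      pderiv' i (A j) x = (x i - x j)⁻¹ • (A i x * A j x - A j x * A i x))
    (hSchDiag : ∀ x ∈ U, ∀ i : Fin n,
      pderiv' i (A i) x =
        -∑ j ∈ Finset.univ.erase i,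
          (x i - x j)⁻¹ • (A i x * A j x - A j x * A i x)) :
    ∀ j : Fin n,
      (∃ c : ℂ, ∀ x ∈ U, Matrix.trace (A j x) = c) ∧
      (∃ c : ℂ, ∀ x ∈ U, Matrix.trace (A j x * A j x) = c) ∧
      (∃ c : ℂ, ∀ x ∈ U, Matrix.det (A j x) = c) :=
  schlesinger_spectral_invariants_general n U hU hUconn A hA hSchOff hSchDiag
end

section
/- Let D ⊆ ℂ be open, let Φ : D → M₂(ℂ) be differentiable with det Φ(λ) ≠ 0 for all λ ∈ D, and let f : D → ℂ be differentiable with f(λ)²·det Φ(λ) = 1 for all λ ∈ D. Set Ψ(λ) = f(λ)·Φ(λ). Then for every λ ∈ D: (1/2)·tr((Ψ′(λ)Ψ(λ)⁻¹)²) = −det(Φ′(λ))/det Φ(λ) + (1/4)·((det Φ)′(λ)/det Φ(λ))², where Φ′ and Ψ′ denote entrywise derivatives and (det Φ)′ the derivative of the determinant function. Equivalently, since det Ψ ≡ 1 forces tr(Ψ′Ψ⁻¹) = 0, the left-hand side equals −det(Ψ′(λ)Ψ(λ)⁻¹). -/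
/-!
Write `N = Φ'Φ⁻¹` and `c = f'/f`, so that `Ψ'Ψ⁻¹ = N + c • 1`. Jacobi's formula gives
`tr N = (det Φ)'/det Φ`, and taking the logarithmic derivative of `f² det Φ = 1` gives
`2c + tr N = 0`; hence `Ψ'Ψ⁻¹` is traceless. For a traceless `2 × 2` matrix `M`,
Cayley–Hamilton gives `tr M² = -2 det M`, and expanding `det (N + c • 1) = det N + c tr N + c²`
at `c = -tr N / 2` yields the formula.
-/

attribute [local instance] Matrix.normedAddCommGroup Matrix.normedSpace

namespace Matrix

variable {R K : Type*} [CommRing R] [Field K]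

theorem trace_sq_fin_two (M : Matrix (Fin 2) (Fin 2) R) :
    trace (M ^ 2) = trace M ^ 2 - 2 * det M := by
  simp only [sq, trace_fin_two, det_fin_two, mul_apply, Fin.sum_univ_two]
  ring

theorem det_add_smul_one_fin_two (N : Matrix (Fin 2) (Fin 2) R) (c : R) :
    det (N + c • 1) = det N + c * trace N + c ^ 2 := by
  simp only [det_fin_two, trace_fin_two, add_apply, smul_apply, one_apply_eq, one_apply_ne,
    zero_ne_one, one_ne_zero, ne_eq, not_false_eq_true, smul_eq_mul, mul_one, mul_zero, add_zero]
  ring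

theorem half_trace_sq_of_trace_eq_zero [NeZero (2 : K)] {M : Matrix (Fin 2) (Fin 2) K}
    (hM : trace M = 0) : 1 / 2 * trace (M ^ 2) = -det M := by
  rw [trace_sq_fin_two, hM]
  field_simp
  ring

variable {n : Type*} [Fintype n] [DecidableEq n] {A : Matrix n n K}

theorem trace_adjugate_mul (hA : det A ≠ 0) (B : Matrix n n K) :
    trace (adjugate A * B) = det A * trace (B * A⁻¹) := by
  rw [inv_def, mul_smul_comm, trace_smul, trace_mul_comm, Ring.inverse_eq_inv', smul_eq_mul,
    mul_inv_cancel_left₀ hA]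

theorem smul_add_smul_mul_inv_smul (hA : det A ≠ 0) (B : Matrix n n K) {c : K} (hc : c ≠ 0)
    (a : K) : (c • B + a • A) * (c • A)⁻¹ = B * A⁻¹ + (a / c) • 1 := by
  have := invertibleOfNonzero hc
  have hA' : IsUnit (det A) := isUnit_iff_ne_zero.mpr hA
  rw [inv_smul A c hA', invOf_eq_inv, add_mul, smul_mul_smul_comm, smul_mul_smul_comm,
    mul_inv_cancel₀ hc, one_smul, mul_nonsing_inv A hA', div_eq_mul_inv]

end Matrix

open Matrix

variable {𝕜 : Type*} [NontriviallyNormedField 𝕜]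

theorem HasDerivAt.det_fin_two {Φ : 𝕜 → Matrix (Fin 2) (Fin 2) 𝕜}
    {Φ' : Matrix (Fin 2) (Fin 2) 𝕜} {z : 𝕜} (h : HasDerivAt Φ Φ' z) :
    HasDerivAt (fun w => det (Φ w)) (trace (adjugate (Φ z) * Φ')) z := by
  have entry (i j : Fin 2) : HasDerivAt (fun w => Φ w i j) (Φ' i j) z :=
    hasDerivAt_pi.mp (hasDerivAt_pi.mp h i) j
  have hval : trace (adjugate (Φ z) * Φ') =
      Φ' 0 0 * Φ z 1 1 + Φ z 0 0 * Φ' 1 1 - (Φ' 0 1 * Φ z 1 0 + Φ z 0 1 * Φ' 1 0) := by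
    rw [trace_fin_two, mul_apply, mul_apply, adjugate_fin_two]
    simp only [of_apply, cons_val', cons_val_fin_one, cons_val_zero, cons_val_one,
      Fin.sum_univ_two, neg_mul]
    ring
  rw [hval]
  simpa only [Matrix.det_fin_two] using
    ((entry 0 0).fun_mul (entry 1 1)).fun_sub ((entry 0 1).fun_mul (entry 1 0))

theorem logDeriv_det_fin_two {Φ : 𝕜 → Matrix (Fin 2) (Fin 2) 𝕜}
    {Φ' : Matrix (Fin 2) (Fin 2) 𝕜} {z : 𝕜} (h : HasDerivAt Φ Φ' z) (hdet : det (Φ z) ≠ 0) :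
    logDeriv (fun w => det (Φ w)) z = trace (Φ' * (Φ z)⁻¹) := by
  rw [logDeriv_apply, h.det_fin_two.deriv, trace_adjugate_mul hdet, mul_div_cancel_left₀ _ hdet]

theorem mul_logDeriv_add_logDeriv_eq_zero_of_pow_mul_eq_one {𝕜' : Type*}
    [NontriviallyNormedField 𝕜'] [NormedAlgebra 𝕜 𝕜'] {f g : 𝕜 → 𝕜'} {z : 𝕜} (n : ℕ)
    (hfg : ∀ᶠ w in nhds z, f w ^ n * g w = 1) (hf : DifferentiableAt 𝕜 f z)
    (hg : DifferentiableAt 𝕜 g z) : n * logDeriv f z + logDeriv g z = 0 := by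
  have hz : f z ^ n * g z = 1 := hfg.self_of_nhds
  have hconst : (fun w => f w ^ n * g w) =ᶠ[nhds z] fun _ => 1 := hfg
  rw [← logDeriv_fun_pow hf, ← logDeriv_mul z (left_ne_zero_of_mul_eq_one hz)
    (right_ne_zero_of_mul_eq_one hz) (hf.fun_pow n) hg, (logDeriv_congr_nhds hconst).eq_of_nhds,
    logDeriv_const, Pi.zero_apply]

theorem half_trace_square_of_unimodular_normalization
    (D : Set ℂ) (hD : IsOpen D)
    (Φ : ℂ → Matrix (Fin 2) (Fin 2) ℂ) (hΦ : DifferentiableOn ℂ Φ D)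
    (hdet : ∀ z ∈ D, Matrix.det (Φ z) ≠ 0)
    (f : ℂ → ℂ) (hf : DifferentiableOn ℂ f D)
    (hff : ∀ z ∈ D, f z ^ 2 * Matrix.det (Φ z) = 1)
    (Ψ : ℂ → Matrix (Fin 2) (Fin 2) ℂ) (hΨ : Ψ = fun z => f z • Φ z) :
    ∀ z ∈ D,
      (1 / 2 : ℂ) * Matrix.trace ((deriv Ψ z * (Ψ z)⁻¹) ^ 2) =
          -Matrix.det (deriv Φ z) / Matrix.det (Φ z) +
            (1 / 4) * (deriv (fun w => Matrix.det (Φ w)) z /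
              Matrix.det (Φ z)) ^ 2 ∧
      (1 / 2 : ℂ) * Matrix.trace ((deriv Ψ z * (Ψ z)⁻¹) ^ 2) =
          -Matrix.det (deriv Ψ z * (Ψ z)⁻¹) := by
  intro z hz
  have hzD : D ∈ nhds z := hD.mem_nhds hz
  have hΦz : HasDerivAt Φ (deriv Φ z) z := (hΦ.differentiableAt hzD).hasDerivAt
  have hfz : HasDerivAt f (deriv f z) z := (hf.differentiableAt hzD).hasDerivAt
  have hf0 : f z ≠ 0 := pow_ne_zero_iff two_ne_zero |>.mp (left_ne_zero_of_mul_eq_one (hff z hz))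
  have hlog := logDeriv_det_fin_two hΦz (hdet z hz)
  have hnormalized : 2 * logDeriv f z + logDeriv (fun w => det (Φ w)) z = 0 := by
    exact_mod_cast mul_logDeriv_add_logDeriv_eq_zero_of_pow_mul_eq_one 2
      (Filter.eventually_of_mem hzD hff) hfz.differentiableAt hΦz.det_fin_two.differentiableAt
  have hM : deriv Ψ z * (Ψ z)⁻¹ = deriv Φ z * (Φ z)⁻¹ + logDeriv f z • 1 := by
    -- `deriv Ψ` uses the plain module structure on matrices; the normed one agrees by defeq.
    have hΨ' : deriv Ψ z = f z • deriv Φ z + deriv f z • Φ z := (hΨ ▸ hfz.fun_smul hΦz).deriv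
    rw [hΨ', hΨ]
    exact smul_add_smul_mul_inv_smul (hdet z hz) _ hf0 _
  have htrace : trace (deriv Ψ z * (Ψ z)⁻¹) = 0 := by
    rw [hM, trace_add, trace_smul, trace_one, ← hlog, Fintype.card_fin, smul_eq_mul,
      Nat.cast_ofNat]
    linear_combination hnormalized
  refine ⟨?_, half_trace_sq_of_trace_eq_zero htrace⟩
  rw [half_trace_sq_of_trace_eq_zero htrace, hM, det_add_smul_one_fin_two, det_mul,
    det_nonsing_inv, Ring.inverse_eq_inv', ← hlog, ← logDeriv_apply]
  linear_combination -(2 * logDeriv f z + logDeriv (fun w => det (Φ w)) z) / 4 * hnormalized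
end

section
/- Let g ≥ 1, let B be a complex symmetric g×g matrix whose imaginary part is positive definite, and let p, q ∈ ℂ^g be half-integer characteristics, i.e. 2p ∈ ℤ^g and 2q ∈ ℤ^g. Then for every z ∈ ℂ^g: Θ[p,q](−z|B) = exp(−4πi⟨p,q⟩)·Θ[p,q](z|B). In particular, if 4⟨p,q⟩ is an odd integer (the characteristic [p,q] is odd) then Θ[p,q](0|B) = 0, while if 4⟨p,q⟩ is an even integer (the characteristic is even) then Θ[p,q](·|B) is an even function of z. -/
/-!
Statement 12: parity of the theta function with a half-integer
characteristic: `Θ[p,q](−z|B) = exp(−4πi⟨p,q⟩)·Θ[p,q](z|B)`; in particular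
`Θ[p,q](0|B) = 0` for odd characteristics, and `Θ[p,q](·|B)` is even for even
characteristics.
-/

open Matrix

noncomputable section

/-- The theta function with characteristic
`Θ[p,q](z|B) = Σ_{m∈ℤ^g} exp(πi⟨B(m+p),m+p⟩ + 2πi⟨z+q,m+p⟩)`. -/
def Theta {g : ℕ} (p q z : Fin g → ℂ) (B : Matrix (Fin g) (Fin g) ℂ) : ℂ :=
  ∑' m : Fin g → ℤ, Complex.exp ((Real.pi : ℂ) * Complex.I *
      ((fun j => (m j : ℂ) + p j) ⬝ᵥ B.mulVec fun j => (m j : ℂ) + p j) +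
    2 * (Real.pi : ℂ) * Complex.I *
      ((fun j => z j + q j) ⬝ᵥ fun j => (m j : ℂ) + p j))

/-- The substitution `m ↦ -m - a` on `ℤ^g`. -/
def negSubEquiv {g : ℕ} (a : Fin g → ℤ) : (Fin g → ℤ) ≃ (Fin g → ℤ) where
  toFun m := fun j => -m j - a j
  invFun m := fun j => -m j - a j
  left_inv m := by funext j; ring
  right_inv m := by funext j; ring

theorem theta_half_integer_characteristic_parity
    (g : ℕ) (hg : 1 ≤ g)
    (B : Matrix (Fin g) (Fin g) ℂ) (hB : B.IsSymm)
    (hIm : (Matrix.of fun i j => (B i j).im : Matrix (Fin g) (Fin g) ℝ).PosDef)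
    (p q : Fin g → ℂ)
    (hp : ∀ j, ∃ m : ℤ, 2 * p j = (m : ℂ))
    (hq : ∀ j, ∃ m : ℤ, 2 * q j = (m : ℂ)) :
    (∀ z : Fin g → ℂ,
      Theta p q (-z) B =
        Complex.exp (-4 * (Real.pi : ℂ) * Complex.I * (p ⬝ᵥ q)) *
          Theta p q z B) ∧
    ((∃ n : ℤ, Odd n ∧ 4 * (p ⬝ᵥ q) = (n : ℂ)) → Theta p q 0 B = 0) ∧
    ((∃ n : ℤ, Even n ∧ 4 * (p ⬝ᵥ q) = (n : ℂ)) →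
      ∀ z : Fin g → ℂ, Theta p q (-z) B = Theta p q z B) := by
  classical
  choose a ha using hp
  choose b hb using hq
  have key : ∀ z : Fin g → ℂ,
      Theta p q (-z) B =
        Complex.exp (-4 * (Real.pi : ℂ) * Complex.I * (p ⬝ᵥ q)) * Theta p q z B := by
    intro z
    rw [Theta, Theta, ← tsum_mul_left, ← Equiv.tsum_eq (negSubEquiv a)]
    apply tsum_congr
    intro m
    set v : Fin g → ℂ := fun j => (m j : ℂ) + p j with hv
    have h1 : (fun j => ((negSubEquiv a m) j : ℂ) + p j) = -v := by
      funext j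
      simp only [negSubEquiv, Equiv.coe_fn_mk, Pi.neg_apply, hv]
      push_cast
      linear_combination ha j
    have h2 : (-v) ⬝ᵥ B.mulVec (-v) = v ⬝ᵥ B.mulVec v := by
      simp [Matrix.mulVec_neg]
    have h3 : ((fun j => (-z) j + q j) ⬝ᵥ (-v)) =
        ((fun j => z j + q j) ⬝ᵥ v) - 2 * (q ⬝ᵥ v) := by
      simp only [dotProduct, Pi.neg_apply, Finset.mul_sum,
        ← Finset.sum_sub_distrib]
      refine Finset.sum_congr rfl fun j _ => by ring
    have h4 : q ⬝ᵥ v = (q ⬝ᵥ fun j => (m j : ℂ)) + p ⬝ᵥ q := by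
      simp only [dotProduct, hv, ← Finset.sum_add_distrib]
      refine Finset.sum_congr rfl fun j _ => by ring
    have h5 : Complex.exp (-4 * (Real.pi : ℂ) * Complex.I *
        (q ⬝ᵥ fun j => (m j : ℂ))) = 1 := by
      have he : -4 * (Real.pi : ℂ) * Complex.I * (q ⬝ᵥ fun j => (m j : ℂ)) =
          ((-(∑ j, b j * m j) : ℤ) : ℂ) * (2 * (Real.pi : ℂ) * Complex.I) := by
        push_cast [dotProduct, Finset.mul_sum]
        rw [← Finset.sum_neg_distrib, Finset.sum_mul]
        refine Finset.sum_congr rfl fun j _ => ?_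
        linear_combination (-2 * (Real.pi : ℂ) * Complex.I * (m j : ℂ)) * hb j
      rw [he, Complex.exp_int_mul_two_pi_mul_I]
    rw [h1, h2, h3, h4]
    have hsplit : (Real.pi : ℂ) * Complex.I * (v ⬝ᵥ B.mulVec v) +
        2 * (Real.pi : ℂ) * Complex.I *
          (((fun j => z j + q j) ⬝ᵥ v) - 2 * ((q ⬝ᵥ fun j => (m j : ℂ)) + p ⬝ᵥ q)) =
        (-4 * (Real.pi : ℂ) * Complex.I * (p ⬝ᵥ q)) +
          ((Real.pi : ℂ) * Complex.I * (v ⬝ᵥ B.mulVec v) +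
            2 * (Real.pi : ℂ) * Complex.I * ((fun j => z j + q j) ⬝ᵥ v)) +
          (-4 * (Real.pi : ℂ) * Complex.I * (q ⬝ᵥ fun j => (m j : ℂ))) := by ring
    rw [hsplit, Complex.exp_add, Complex.exp_add, h5, mul_one]
  refine ⟨key, ?_, ?_⟩
  · rintro ⟨n, hn, hpq⟩
    have h0 := key 0
    rw [neg_zero] at h0
    have hc : Complex.exp (-4 * (Real.pi : ℂ) * Complex.I * (p ⬝ᵥ q)) = -1 := by
      obtain ⟨k, hk⟩ := hn
      have : -4 * (Real.pi : ℂ) * Complex.I * (p ⬝ᵥ q) =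
          ((-(k + 1) : ℤ) : ℂ) * (2 * (Real.pi : ℂ) * Complex.I) +
          (Real.pi : ℂ) * Complex.I := by
        push_cast
        have : ((n : ℂ)) = 2 * k + 1 := by exact_mod_cast congrArg (fun x : ℤ => (x : ℂ)) hk
        linear_combination (-(Real.pi : ℂ) * Complex.I) * hpq +
          (-(Real.pi : ℂ) * Complex.I) * this
      rw [this, Complex.exp_add, Complex.exp_int_mul_two_pi_mul_I, one_mul,
        Complex.exp_pi_mul_I]
    rw [hc, neg_one_mul] at h0
    linear_combination h0 / 2
  · rintro ⟨n, hn, hpq⟩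
    intro z
    have hc : Complex.exp (-4 * (Real.pi : ℂ) * Complex.I * (p ⬝ᵥ q)) = 1 := by
      obtain ⟨k, hk⟩ := hn
      have : -4 * (Real.pi : ℂ) * Complex.I * (p ⬝ᵥ q) =
          ((-k : ℤ) : ℂ) * (2 * (Real.pi : ℂ) * Complex.I) := by
        push_cast
        have : ((n : ℂ)) = k + k := by exact_mod_cast congrArg (fun x : ℤ => (x : ℂ)) hk
        linear_combination (-(Real.pi : ℂ) * Complex.I) * hpq +
          (-(Real.pi : ℂ) * Complex.I) * this
      rw [this, Complex.exp_int_mul_two_pi_mul_I]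
    rw [key z, hc, one_mul]

end
end
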